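/- arXiv:1906.09496 — 2 statements merged into one kernel-verified Lean document; each statement's English description precedes it below -/
import Mathlib

section
/- Call a morphism of schemes f : X ⟶ Y completely decomposed if for every point y of Y there exists a point x of X with f(x) = y such that the induced map of residue fields κ(y) ⟶ κ(x) is an isomorphism. Let f : X ⟶ Y be an étale, completely decomposed morphism of schemes and let g : Z ⟶ Y be any morphism of schemes. Then the base change pullback.snd : X ×_Y Z ⟶ Z is étale and completely decomposed. -/
/-! Given `z : Z`, pick `x` over `g z` with `κ(g z) ≅ κ(x)`. Then `Spec κ(z) ⟶ Spec κ(g z)`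
factors through `Spec κ(x) ⟶ X`, so `Spec κ(z) ⟶ Z` lifts to `X ×_Y Z`. The image `w` of the
lift lies over `z`, and `κ(z) ⟶ κ(w) ⟶ κ(z)` is the identity, so the extension `κ(w)/κ(z)` is
trivial. -/

open CategoryTheory Limits AlgebraicGeometry

def CompletelyDecomposed {X Y : Scheme} (f : X ⟶ Y) : Prop :=
  ∀ y : Y, ∃ x : X, f.base x = y ∧ IsIso (f.residueFieldMap x)

lemma CommRingCat.isIso_of_isIso_comp_of_injective {K L M : CommRingCat} (f : K ⟶ L)
    (u : L ⟶ M) (hu : Function.Injective u) [IsIso (f ≫ u)] : IsIso f := by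
  have hu_surj : Function.Surjective u := fun m ↦ ⟨f (inv (f ≫ u) m), by
    rw [← CommRingCat.comp_apply, ← CommRingCat.comp_apply, IsIso.inv_hom_id,
      CommRingCat.id_apply]⟩
  have : IsIso u := (ConcreteCategory.isIso_iff_bijective u).2 ⟨hu, hu_surj⟩
  exact IsIso.of_isIso_comp_right f u

namespace AlgebraicGeometry.Scheme

lemma exists_isIso_residueFieldMap_of_comp_eq_fromSpecResidueField {W Z : Scheme}
    (h : W ⟶ Z) {z : Z} (φ : Spec (Z.residueField z) ⟶ W)
    (hφ : φ ≫ h = Z.fromSpecResidueField z) :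
    ∃ w : W, h w = z ∧ IsIso (h.residueFieldMap w) := by
  let w := φ.base (IsLocalRing.closedPoint (Z.residueField z))
  have hw : h w = z := by
    change (φ ≫ h) _ = z
    rw [hφ]
    exact fromSpecResidueField_apply z _
  refine ⟨w, hw, ?_⟩
  let u : W.residueField w ⟶ Z.residueField z :=
    @descResidueField _ _ _ _ (stalkClosedPointTo φ) (isLocalHom_stalkClosedPointTo φ)
  have hu : Spec.map u ≫ W.fromSpecResidueField w = φ :=
    descResidueField_stalkClosedPointTo_fromSpecResidueField _ _ φ
  have h_comp : h.residueFieldMap w ≫ u = (Z.residueFieldCongr hw).hom := by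
    rw [← Spec.map_inj, ← cancel_mono (Z.fromSpecResidueField (h w)),
      residueFieldCongr_fromSpecResidueField, Spec.map_comp, Category.assoc,
      Hom.SpecMap_residueFieldMap_fromSpecResidueField, reassoc_of% hu, hφ]
  have : IsIso (h.residueFieldMap w ≫ u) := h_comp ▸ inferInstance
  exact CommRingCat.isIso_of_isIso_comp_of_injective _ u u.hom.injective

lemma exists_lift_fromSpecResidueField_of_isIso_residueFieldMap {X Y Z : Scheme}
    (f : X ⟶ Y) (g : Z ⟶ Y) {x : X} {z : Z} (hxz : f x = g z)
    [IsIso (f.residueFieldMap x)] :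
    ∃ φ : Spec (Z.residueField z) ⟶ pullback f g,
      φ ≫ pullback.snd f g = Z.fromSpecResidueField z := by
  let ψ : X.residueField x ⟶ Z.residueField z :=
    inv (f.residueFieldMap x) ≫ (Y.residueFieldCongr hxz).hom ≫ g.residueFieldMap z
  have hψ : (Spec.map ψ ≫ X.fromSpecResidueField x) ≫ f = Z.fromSpecResidueField z ≫ g := by
    rw [Category.assoc, ← Hom.SpecMap_residueFieldMap_fromSpecResidueField,
      ← Spec.map_comp_assoc, IsIso.hom_inv_id_assoc, Spec.map_comp, Category.assoc,
      residueFieldCongr_fromSpecResidueField, Hom.SpecMap_residueFieldMap_fromSpecResidueField]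
  exact ⟨pullback.lift _ _ hψ, pullback.lift_snd _ _ _⟩

end AlgebraicGeometry.Scheme

open Scheme in
lemma CompletelyDecomposed.pullback_snd {X Y Z : Scheme} {f : X ⟶ Y}
    (hf : CompletelyDecomposed f) (g : Z ⟶ Y) : CompletelyDecomposed (pullback.snd f g) := by
  intro z
  obtain ⟨x, hxz, _⟩ := hf (g z)
  obtain ⟨φ, hφ⟩ := exists_lift_fromSpecResidueField_of_isIso_residueFieldMap f g hxz
  exact exists_isIso_residueFieldMap_of_comp_eq_fromSpecResidueField _ φ hφ

/-- Étale completely decomposed morphisms of schemes are stable under base change. -/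
theorem completelyDecomposed_etale_stableUnderBaseChange {X Y Z : Scheme}
    (f : X ⟶ Y) [Etale f] (hf : CompletelyDecomposed f) (g : Z ⟶ Y) :
    Etale (pullback.snd f g) ∧ CompletelyDecomposed (pullback.snd f g) :=
  ⟨inferInstance, hf.pullback_snd g⟩
end

section
/- Call a morphism of schemes f : X ⟶ Y completely decomposed if for every point y of Y there exists a point x of X with f(x) = y such that the induced map of residue fields κ(y) ⟶ κ(x) is an isomorphism. If f : X ⟶ Y and g : Y ⟶ Z are both étale and completely decomposed morphisms of schemes, then the composite f ≫ g : X ⟶ Z is étale and completely decomposed. -/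
open CategoryTheory AlgebraicGeometry

theorem CompletelyDecomposed.comp {X Y Z : Scheme} {f : X ⟶ Y} {g : Y ⟶ Z}
    (hf : CompletelyDecomposed f) (hg : CompletelyDecomposed g) :
    CompletelyDecomposed (f ≫ g) := by
  intro z
  obtain ⟨y, rfl, hy⟩ := hg z
  obtain ⟨x, rfl, hx⟩ := hf y
  refine ⟨x, rfl, ?_⟩
  rw [Scheme.residueFieldMap_comp]
  exact IsIso.comp_isIso' hy hx

/-- Étale completely decomposed morphisms of schemes are stable under composition. -/
theorem completelyDecomposed_etale_comp {X Y Z : Scheme}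
    (f : X ⟶ Y) (g : Y ⟶ Z) [Etale f] [Etale g]
    (hf : CompletelyDecomposed f) (hg : CompletelyDecomposed g) :
    Etale (f ≫ g) ∧ CompletelyDecomposed (f ≫ g) :=
  ⟨inferInstance, hf.comp hg⟩
end
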